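/- arXiv:2010.13679 — 3 statements merged into one kernel-verified Lean document; each statement's English description precedes it below -/
import Mathlib

section
/- Let τ ∈ (0,1) and let θ, θ' ∈ ℝ^p be vectors with ‖θ‖₂ = ‖θ'‖₂ = τ. Define the p×p matrix D = (1/2)[(θθ'^T + θ'θ^T) − τ²(θθ^T + θ'θ'^T)]. Then D has rank at most 2, and its (at most two) nonzero eigenvalues are λ₁ = ((⟨θ,θ'⟩ + τ²)/2)(1 − τ²) ≥ 0 and λ₂ = ((⟨θ,θ'⟩ − τ²)/2)(1 + τ²) ≤ 0. -/
open Matrix in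
/-- The matrix `D = ½[(θθ'ᵀ + θ'θᵀ) − τ²(θθᵀ + θ'θ'ᵀ)]` has rank at most 2 and its
nonzero eigenvalues are `λ₁ ≥ 0` and `λ₂ ≤ 0`. -/
theorem stmt_2 (p : ℕ) (τ : ℝ) (hτ : τ ∈ Set.Ioo (0 : ℝ) 1) (θ θ' : Fin p → ℝ)
    (hθ : Real.sqrt (∑ i, θ i ^ 2) = τ) (hθ' : Real.sqrt (∑ i, θ' i ^ 2) = τ)
    (D : Matrix (Fin p) (Fin p) ℝ)
    (hD : D = (1 / 2 : ℝ) •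
      (vecMulVec θ θ' + vecMulVec θ' θ - τ ^ 2 • (vecMulVec θ θ + vecMulVec θ' θ')))
    (lam₁ lam₂ : ℝ)
    (h₁ : lam₁ = ((∑ i, θ i * θ' i) + τ ^ 2) / 2 * (1 - τ ^ 2))
    (h₂ : lam₂ = ((∑ i, θ i * θ' i) - τ ^ 2) / 2 * (1 + τ ^ 2)) :
    D.rank ≤ 2 ∧ 0 ≤ lam₁ ∧ lam₂ ≤ 0 ∧
      ∀ (μ : ℝ) (x : Fin p → ℝ), x ≠ 0 → D.mulVec x = μ • x →
        μ = 0 ∨ μ = lam₁ ∨ μ = lam₂ := by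
  obtain ⟨hτ0, hτ1⟩ := hτ
  -- norms
  have hnθ : (∑ i, θ i ^ 2) = τ ^ 2 := by
    rw [← hθ]; exact (Real.sq_sqrt (Finset.sum_nonneg fun i _ => sq_nonneg _)).symm
  have hnθ' : (∑ i, θ' i ^ 2) = τ ^ 2 := by
    rw [← hθ']; exact (Real.sq_sqrt (Finset.sum_nonneg fun i _ => sq_nonneg _)).symm
  set s : ℝ := ∑ i, θ i * θ' i with hs
  -- Cauchy–Schwarz
  have hcs : s ^ 2 ≤ τ ^ 2 * τ ^ 2 := by
    have := Finset.sum_mul_sq_le_sq_mul_sq Finset.univ θ θ'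
    rwa [hnθ, hnθ'] at this
  have hτ2 : (0:ℝ) < τ ^ 2 := by positivity
  have habs : -τ^2 ≤ s ∧ s ≤ τ^2 := by
    constructor <;> nlinarith [sq_nonneg (s + τ^2), sq_nonneg (s - τ^2)]
  -- key formula for D.mulVec
  have key : ∀ y : Fin p → ℝ, D.mulVec y =
      ((1:ℝ)/2 * ((∑ j, θ' j * y j) - τ^2 * ∑ j, θ j * y j)) • θ
      + ((1:ℝ)/2 * ((∑ j, θ j * y j) - τ^2 * ∑ j, θ' j * y j)) • θ' := by
    intro y
    funext i
    simp only [hD, Matrix.mulVec, dotProduct, Matrix.smul_apply, Matrix.add_apply,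
      Matrix.sub_apply, Matrix.vecMulVec_apply, smul_eq_mul, Pi.add_apply, Pi.smul_apply,
      Finset.mul_sum, Finset.sum_mul, mul_sub, sub_mul, ← Finset.sum_sub_distrib,
      ← Finset.sum_add_distrib]
    exact Finset.sum_congr rfl fun j _ => by ring
  refine ⟨?_, ?_, ?_, ?_⟩
  · -- rank ≤ 2
    have hrange : LinearMap.range D.mulVecLin ≤ Submodule.span ℝ {θ, θ'} := by
      rintro _ ⟨y, rfl⟩
      rw [Matrix.mulVecLin_apply, key y]
      exact Submodule.add_mem _
        (Submodule.smul_mem _ _ (Submodule.subset_span (Or.inl rfl)))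
        (Submodule.smul_mem _ _ (Submodule.subset_span (Or.inr rfl)))
    have h1 : D.rank ≤ Module.finrank ℝ (Submodule.span ℝ ({θ, θ'} : Set (Fin p → ℝ))) :=
      Submodule.finrank_mono hrange
    refine h1.trans ?_
    classical
    have h2 : (({θ, θ'} : Finset (Fin p → ℝ)) : Set (Fin p → ℝ)) = {θ, θ'} := by simp
    calc Module.finrank ℝ (Submodule.span ℝ ({θ, θ'} : Set (Fin p → ℝ)))
        = Module.finrank ℝ (Submodule.span ℝ (({θ, θ'} : Finset (Fin p → ℝ)) : Set (Fin p → ℝ))) := by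
          rw [h2]
      _ ≤ ({θ, θ'} : Finset (Fin p → ℝ)).card := finrank_span_finset_le_card _
      _ ≤ 2 := by
          refine (Finset.card_insert_le _ _).trans ?_
          simp
  · rw [h₁]
    have : τ^2 < 1 := by nlinarith
    apply mul_nonneg
    · linarith [habs.1]
    · linarith
  · rw [h₂]
    have h3 : (s - τ^2)/2 ≤ 0 := by linarith [habs.2]
    nlinarith [habs.2, sq_nonneg τ]
  · intro μ x hx hDx
    set u : ℝ := ∑ j, θ j * x j with hu
    set v : ℝ := ∑ j, θ' j * x j with hv
    set a : ℝ := (1:ℝ)/2 * (v - τ^2 * u) with ha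
    set b : ℝ := (1:ℝ)/2 * (u - τ^2 * v) with hb
    have hxeq : a • θ + b • θ' = μ • x := by rw [← key x, hDx]
    have hxi : ∀ i, a * θ i + b * θ' i = μ * x i := fun i => by
      have := congrFun hxeq i
      simpa using this
    have hsum : ∀ (w : Fin p → ℝ),
        a * (∑ i, w i * θ i) + b * (∑ i, w i * θ' i) = μ * ∑ i, w i * x i := by
      intro w
      have h1 : ∑ i, w i * (a * θ i + b * θ' i) = ∑ i, w i * (μ * x i) :=
        Finset.sum_congr rfl fun i _ => by rw [hxi i]
      calc a * (∑ i, w i * θ i) + b * (∑ i, w i * θ' i)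
          = ∑ i, w i * (a * θ i + b * θ' i) := by
            simp only [Finset.mul_sum, ← Finset.sum_add_distrib]
            exact Finset.sum_congr rfl fun i _ => by ring
        _ = ∑ i, w i * (μ * x i) := h1
        _ = μ * ∑ i, w i * x i := by
            simp only [Finset.mul_sum]
            exact Finset.sum_congr rfl fun i _ => by ring
    have hU : a * τ^2 + b * s = μ * u := by
      have := hsum θ
      rw [show (∑ i, θ i * θ i) = τ^2 by rw [← hnθ]; exact Finset.sum_congr rfl fun i _ => (sq (θ i)).symm] at this
      rwa [hu]
    have hV : a * s + b * τ^2 = μ * v := by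
      have := hsum θ'
      rw [show (∑ i, θ' i * θ i) = s by rw [hs]; exact Finset.sum_congr rfl fun i _ => mul_comm _ _,
          show (∑ i, θ' i * θ' i) = τ^2 by rw [← hnθ']; exact Finset.sum_congr rfl fun i _ => (sq (θ' i)).symm] at this
      rwa [hv]
    by_cases huv : u = 0 ∧ v = 0
    · left
      have ha0 : a = 0 := by rw [ha, huv.1, huv.2]; ring
      have hb0 : b = 0 := by rw [hb, huv.1, huv.2]; ring
      have : μ • x = 0 := by rw [← hxeq, ha0, hb0]; simp
      rcases smul_eq_zero.mp this with h | h
      · exact h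
      · exact absurd h hx
    · right
      have hplus : μ * (u + v) = lam₁ * (u + v) := by
        rw [h₁]; rw [ha, hb] at hU hV; linear_combination -hU - hV
      have hminus : μ * (u - v) = lam₂ * (u - v) := by
        rw [h₂]; rw [ha, hb] at hU hV; linear_combination hV - hU
      by_cases hpv : u + v = 0
      · right
        have hmv : u - v ≠ 0 := by
          intro h
          exact huv ⟨by linarith [hpv, h], by linarith [hpv, h]⟩
        exact mul_right_cancel₀ hmv hminus
      · left
        exact mul_right_cancel₀ hpv hplus
end

section
/- Let τ ∈ (0,1), σ = √(1 − τ²), and for each θ ∈ ℝ^p let Z ~ N(0, I_p) be a standard Gaussian vector. For θ, θ' ∈ ℝ^p with ‖θ‖₂ = ‖θ'‖₂ = τ, let D = (1/2)[(θθ'^T + θ'θ^T) − τ²(θθ^T + θ'θ'^T)] and λ = (1 − τ⁴)^{-1}. Then E[exp(λ Z^T D Z)] = λ^{-1/2}/(1 − ⟨θ,θ'⟩). -/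
/-!
With `u = θ + θ'` and `v = θ - θ'`, the quadratic form diagonalises as
`λ ZᵀDZ = c₁ ⟪u, Z⟫² + c₂ ⟪v, Z⟫²`, and `u ⟂ v` because `‖θ‖ = ‖θ'‖`. For orthogonal vectors the
projections `⟪u, Z⟫`, `⟪v, Z⟫` of a standard Gaussian vector are independent centred Gaussians of
variances `‖u‖²`, `‖v‖²` (compare characteristic functions), so the expectation factors into two
one-dimensional integrals `E[exp (c G²)] = (1 - 2 c Var G)^{-1/2}`.
-/

open Matrix MeasureTheory ProbabilityTheory Real
open scoped NNReal RealInnerProductSpace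

-- For `s ≥ 1/2` both sides are `0`: the integrand is not integrable and `√` of a negative is `0`.
lemma integral_exp_mul_sq_gaussianReal (s : ℝ) :
    ∫ x, exp (s * x ^ 2) ∂gaussianReal 0 1 = (√(1 - 2 * s))⁻¹ := by
  have hpdf (x : ℝ) : gaussianPDFReal 0 1 x * exp (s * x ^ 2)
      = (√(2 * π))⁻¹ * exp (-(1 / 2 - s) * x ^ 2) := by
    rw [gaussianPDFReal, mul_assoc, ← exp_add]
    simp only [NNReal.coe_one, mul_one, sub_zero]
    congr 2
    ring
  simp_rw [integral_gaussianReal_eq_integral_smul one_ne_zero, smul_eq_mul, hpdf,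
    integral_const_mul, integral_gaussian]
  rw [← sqrt_inv, ← sqrt_mul (by positivity), ← sqrt_inv]
  congr 1
  field_simp

lemma integral_exp_mul_sq_gaussianReal_var (s : ℝ) (v : ℝ≥0) :
    ∫ x, exp (s * x ^ 2) ∂gaussianReal 0 v = (√(1 - 2 * s * v))⁻¹ := by
  have hmap : (gaussianReal 0 1).map (√v * ·) = gaussianReal 0 v := by
    rw [gaussianReal_map_const_mul]
    congr 1
    · simp
    · ext; simp
  rw [← hmap, integral_map (by fun_prop) (by fun_prop)]
  simp_rw [mul_pow, sq_sqrt v.coe_nonneg, ← mul_assoc]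
  rw [integral_exp_mul_sq_gaussianReal, mul_assoc]

section InnerProductSpace

variable {E : Type*} [NormedAddCommGroup E] [InnerProductSpace ℝ E] {ι : Type*} [Fintype ι]

lemma norm_sum_smul_sq_of_pairwise_inner_eq_zero {w : ι → E}
    (hw : Pairwise fun i j ↦ ⟪w i, w j⟫ = 0) (t : ι → ℝ) :
    ‖∑ i, t i • w i‖ ^ 2 = ∑ i, t i ^ 2 * ‖w i‖ ^ 2 := by
  classical
  rw [← real_inner_self_eq_norm_sq, sum_inner]
  refine Finset.sum_congr rfl fun i _ ↦ ?_
  rw [inner_sum, Finset.sum_eq_single i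
      (fun j _ hji ↦ by simp [inner_smul_left, inner_smul_right, hw hji.symm]) (by simp),
    real_inner_smul_left, real_inner_smul_right, real_inner_self_eq_norm_sq]
  ring

variable [FiniteDimensional ℝ E] [MeasurableSpace E] [BorelSpace E]

lemma stdGaussian_map_inner_of_pairwise_inner_eq_zero {w : ι → E}
    (hw : Pairwise fun i j ↦ ⟪w i, w j⟫ = 0) :
    (stdGaussian E).map (fun x i ↦ ⟪w i, x⟫) = Measure.pi fun i ↦ gaussianReal 0 (‖w i‖₊ ^ 2) := by
  suffices h : (stdGaussian E).map (fun x ↦ WithLp.toLp 2 fun i ↦ ⟪w i, x⟫)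
      = (Measure.pi fun i ↦ gaussianReal 0 (‖w i‖₊ ^ 2)).map (WithLp.toLp 2) by
    have := congrArg (Measure.map (WithLp.ofLp (p := 2))) h
    rwa [Measure.map_map (by fun_prop) (by fun_prop), Measure.map_map (by fun_prop) (by fun_prop),
      Function.comp_def, Function.comp_def, Measure.map_id'] at this
  refine Measure.ext_of_charFun (funext fun t ↦ ?_)
  rw [charFun_pi, charFun_apply, integral_map (by fun_prop) (by fun_prop)]
  have hinner (x : E) : ⟪WithLp.toLp 2 fun i ↦ ⟪w i, x⟫, t⟫ = ⟪x, ∑ i, t i • w i⟫ := by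
    simp only [PiLp.inner_apply, inner_sum, real_inner_smul_right, real_inner_comm (w _),
      RCLike.inner_apply, conj_trivial]
  simp_rw [hinner, ← charFun_apply, charFun_stdGaussian, ← Complex.ofReal_pow,
    norm_sum_smul_sq_of_pairwise_inner_eq_zero hw, charFun_gaussianReal, ← Complex.exp_sum]
  congr 1
  push_cast
  rw [neg_div, Finset.sum_div, ← Finset.sum_neg_distrib]
  refine Finset.sum_congr rfl fun i _ ↦ ?_
  ring

lemma integral_exp_sum_mul_inner_sq_stdGaussian {w : ι → E}
    (hw : Pairwise fun i j ↦ ⟪w i, w j⟫ = 0) (c : ι → ℝ) :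
    ∫ x, exp (∑ i, c i * ⟪w i, x⟫ ^ 2) ∂stdGaussian E = ∏ i, (√(1 - 2 * c i * ‖w i‖ ^ 2))⁻¹ := by
  have hmeas : Measurable fun y : ι → ℝ ↦ exp (∑ i, c i * y i ^ 2) := by fun_prop
  rw [← integral_map (φ := fun x i ↦ ⟪w i, x⟫) (by fun_prop) hmeas.aestronglyMeasurable,
    stdGaussian_map_inner_of_pairwise_inner_eq_zero hw]
  simp_rw [exp_sum]
  rw [integral_fintype_prod_eq_prod (f := fun i y ↦ exp (c i * y ^ 2))]
  simp_rw [integral_exp_mul_sq_gaussianReal_var]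
  push_cast
  rfl

end InnerProductSpace

lemma integral_pi_gaussianReal_eq_integral_stdGaussian {ι : Type*} [Fintype ι]
    (f : (ι → ℝ) → ℝ) :
    ∫ z, f z ∂(Measure.pi fun _ : ι ↦ gaussianReal 0 1)
      = ∫ x, f x.ofLp ∂stdGaussian (EuclideanSpace ℝ ι) := by
  rw [← map_pi_eq_stdGaussian, ← MeasurableEquiv.coe_toLp, integral_map_equiv]
  rfl

section DotProduct

variable {ι : Type*} [Fintype ι]

lemma integral_exp_sum_mul_dotProduct_sq_pi_gaussianReal {κ : Type*} [Fintype κ]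
    {w : κ → ι → ℝ} (hw : Pairwise fun k l ↦ w k ⬝ᵥ w l = 0) (c : κ → ℝ) :
    ∫ z, exp (∑ k, c k * (w k ⬝ᵥ z) ^ 2) ∂(Measure.pi fun _ : ι ↦ gaussianReal 0 1)
      = ∏ k, (√(1 - 2 * c k * (w k ⬝ᵥ w k)))⁻¹ := by
  have hinner (k : κ) (x : EuclideanSpace ℝ ι) : w k ⬝ᵥ x.ofLp = ⟪WithLp.toLp 2 (w k), x⟫ := by
    rw [EuclideanSpace.inner_eq_star_dotProduct, WithLp.ofLp_toLp, star_trivial, dotProduct_comm]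
  have hnorm (k : κ) : w k ⬝ᵥ w k = ‖WithLp.toLp 2 (w k)‖ ^ 2 := by
    rw [← real_inner_self_eq_norm_sq, ← hinner]
  have horth : Pairwise fun k l ↦ ⟪WithLp.toLp 2 (w k), WithLp.toLp 2 (w l)⟫ = 0 :=
    fun k l hkl ↦ (hinner k _).symm.trans (hw hkl)
  have h := integral_exp_sum_mul_inner_sq_stdGaussian horth c
  simp_rw [← hinner, ← hnorm] at h
  rw [integral_pi_gaussianReal_eq_integral_stdGaussian, h]

lemma integral_exp_mul_sq_add_mul_sq_pi_gaussianReal {a b : ι → ℝ} (hab : a ⬝ᵥ b = 0)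
    (c₁ c₂ : ℝ) :
    ∫ z, exp (c₁ * (a ⬝ᵥ z) ^ 2 + c₂ * (b ⬝ᵥ z) ^ 2) ∂(Measure.pi fun _ : ι ↦ gaussianReal 0 1)
      = (√(1 - 2 * c₁ * (a ⬝ᵥ a)))⁻¹ * (√(1 - 2 * c₂ * (b ⬝ᵥ b)))⁻¹ := by
  have hw : Pairwise fun k l ↦ ![a, b] k ⬝ᵥ ![a, b] l = 0 := by
    intro k l hkl
    fin_cases k <;> fin_cases l <;> simp_all [dotProduct_comm b a]
  simpa only [Fin.sum_univ_two, Fin.prod_univ_two, cons_val_zero, cons_val_one] using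
    integral_exp_sum_mul_dotProduct_sq_pi_gaussianReal hw ![c₁, c₂]

end DotProduct

namespace Matrix

variable {ι : Type*} [Fintype ι]

lemma dotProduct_self_eq_of_sqrt_sum_sq_eq {v : ι → ℝ} {r : ℝ} (h : √(∑ i, v i ^ 2) = r) :
    v ⬝ᵥ v = r ^ 2 := by
  rw [← h, sq_sqrt (by positivity)]
  simp [dotProduct, sq]

lemma dotProduct_vecMulVec_mulVec (a b z : ι → ℝ) :
    z ⬝ᵥ (vecMulVec a b *ᵥ z) = (a ⬝ᵥ z) * (b ⬝ᵥ z) := by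
  rw [vecMulVec_mulVec, op_smul_eq_smul, dotProduct_smul, smul_eq_mul, dotProduct_comm z a,
    mul_comm]

lemma dotProduct_mulVec_eq_sq_add_sq (θ θ' z : ι → ℝ) (r : ℝ) :
    z ⬝ᵥ (((1 / 2 : ℝ) • (vecMulVec θ θ' + vecMulVec θ' θ - r • (vecMulVec θ θ + vecMulVec θ' θ')))
      *ᵥ z) = (1 - r) / 4 * ((θ + θ') ⬝ᵥ z) ^ 2 + -(1 + r) / 4 * ((θ - θ') ⬝ᵥ z) ^ 2 := by
  simp only [smul_mulVec, sub_mulVec, add_mulVec, dotProduct_smul, dotProduct_sub, dotProduct_add,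
    dotProduct_vecMulVec_mulVec, add_dotProduct, sub_dotProduct, smul_eq_mul]
  ring

end Matrix

lemma inv_sqrt_mul_inv_sqrt_eq_rpow_div {τ s lam : ℝ} (hτ : τ ^ 2 < 1) (hs : s ≤ τ ^ 2)
    (hlam : lam = (1 - τ ^ 4)⁻¹) :
    (√(1 - 2 * (lam * ((1 - τ ^ 2) / 4)) * (2 * τ ^ 2 + 2 * s)))⁻¹
        * (√(1 - 2 * (lam * (-(1 + τ ^ 2) / 4)) * (2 * τ ^ 2 - 2 * s)))⁻¹
      = lam ^ (-(1 : ℝ) / 2) / (1 - s) := by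
  have hτ_add : 0 < 1 + τ ^ 2 := by positivity
  have hτ_sub : 0 < 1 - τ ^ 2 := by linarith
  have hs' : 0 < 1 - s := by linarith
  have hlam_eq : lam = ((1 + τ ^ 2) * (1 - τ ^ 2))⁻¹ := by rw [hlam]; ring
  have h₁ : 1 - 2 * (lam * ((1 - τ ^ 2) / 4)) * (2 * τ ^ 2 + 2 * s) = (1 - s) / (1 + τ ^ 2) := by
    rw [hlam_eq]
    field_simp
    ring
  have h₂ : 1 - 2 * (lam * (-(1 + τ ^ 2) / 4)) * (2 * τ ^ 2 - 2 * s) = (1 - s) / (1 - τ ^ 2) := by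
    rw [hlam_eq]
    field_simp
    ring
  have hprod : (1 - s) / (1 + τ ^ 2) * ((1 - s) / (1 - τ ^ 2)) = (1 - s) ^ 2 * lam := by
    rw [hlam_eq]
    field_simp
  rw [h₁, h₂, ← mul_inv, ← sqrt_mul (by positivity), hprod, sqrt_mul (sq_nonneg _),
    sqrt_sq hs'.le, show -(1 : ℝ) / 2 = -(1 / 2) by norm_num,
    rpow_neg (by rw [hlam_eq]; positivity), ← sqrt_eq_rpow]
  field_simp

open Matrix MeasureTheory in
theorem stmt_4_general (p : ℕ) (τ : ℝ) (hτ : τ ∈ Set.Ioo (0 : ℝ) 1)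
    (θ θ' : Fin p → ℝ)
    (hθ : Real.sqrt (∑ i, θ i ^ 2) = τ) (hθ' : Real.sqrt (∑ i, θ' i ^ 2) = τ)
    (D : Matrix (Fin p) (Fin p) ℝ)
    (hD : D = (1 / 2 : ℝ) •
      (vecMulVec θ θ' + vecMulVec θ' θ - τ ^ 2 • (vecMulVec θ θ + vecMulVec θ' θ')))
    (lam : ℝ) (hlam : lam = (1 - τ ^ 4)⁻¹) :
    ∫ z : Fin p → ℝ, Real.exp (lam * dotProduct z (D.mulVec z))
        ∂(Measure.pi fun _ : Fin p => ProbabilityTheory.gaussianReal 0 1)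
      = lam ^ (-(1 : ℝ) / 2) / (1 - ∑ i, θ i * θ' i) := by
  have hθθ := dotProduct_self_eq_of_sqrt_sum_sq_eq hθ
  have hθ'θ' := dotProduct_self_eq_of_sqrt_sum_sq_eq hθ'
  have hθθ' : θ ⬝ᵥ θ' = ∑ i, θ i * θ' i := rfl
  have horth : (θ + θ') ⬝ᵥ (θ - θ') = 0 := by
    simp only [add_dotProduct, dotProduct_sub, hθθ, hθ'θ', dotProduct_comm θ' θ]
    ring
  have hnorm_add : (θ + θ') ⬝ᵥ (θ + θ') = 2 * τ ^ 2 + 2 * θ ⬝ᵥ θ' := by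
    simp only [add_dotProduct, dotProduct_add, hθθ, hθ'θ', dotProduct_comm θ' θ]
    ring
  have hnorm_sub : (θ - θ') ⬝ᵥ (θ - θ') = 2 * τ ^ 2 - 2 * θ ⬝ᵥ θ' := by
    simp only [sub_dotProduct, dotProduct_sub, hθθ, hθ'θ', dotProduct_comm θ' θ]
    ring
  have hθθ'_le : θ ⬝ᵥ θ' ≤ τ ^ 2 := by
    have h := dotProduct_self_star_nonneg (θ - θ')
    rw [star_trivial, hnorm_sub] at h
    linarith
  simp_rw [hD, dotProduct_mulVec_eq_sq_add_sq, mul_add, ← mul_assoc]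
  rw [integral_exp_mul_sq_add_mul_sq_pi_gaussianReal horth, hnorm_add, hnorm_sub, ← hθθ']
  exact inv_sqrt_mul_inv_sqrt_eq_rpow_div (by nlinarith [hτ.1, hτ.2]) hθθ'_le hlam

open Matrix MeasureTheory in
/-- For `Z ~ N(0, I_p)`, `E[exp (λ ZᵀDZ)] = λ^{-1/2}/(1 − ⟨θ,θ'⟩)`. -/
theorem stmt_4 (p : ℕ) (τ : ℝ) (hτ : τ ∈ Set.Ioo (0 : ℝ) 1)
    (σ : ℝ) (hσ : σ = Real.sqrt (1 - τ ^ 2)) (θ θ' : Fin p → ℝ)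
    (hθ : Real.sqrt (∑ i, θ i ^ 2) = τ) (hθ' : Real.sqrt (∑ i, θ' i ^ 2) = τ)
    (D : Matrix (Fin p) (Fin p) ℝ)
    (hD : D = (1 / 2 : ℝ) •
      (vecMulVec θ θ' + vecMulVec θ' θ - τ ^ 2 • (vecMulVec θ θ + vecMulVec θ' θ')))
    (lam : ℝ) (hlam : lam = (1 - τ ^ 4)⁻¹) :
    ∫ z : Fin p → ℝ, Real.exp (lam * dotProduct z (D.mulVec z))
        ∂(Measure.pi fun _ : Fin p => ProbabilityTheory.gaussianReal 0 1)
      = lam ^ (-(1 : ℝ) / 2) / (1 - ∑ i, θ i * θ' i) :=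
  stmt_4_general p τ hτ θ θ' hθ hθ' D hD lam hlam
end

section
/- Let ξ be an N-dimensional standard Gaussian vector and X an N×p random matrix independent of ξ. For θ ∈ ℝ^p and σ > 0, let P_{θ,σ} denote the joint law of (X, Y) where Y = Xθ + σξ. Let τ ∈ (0,1), σ = √(1−τ²), λ = (1−τ⁴)^{-1}. Then for any θ, θ' ∈ ℝ^p, ∫ dP_{θ,σ} dP_{θ',σ} / dP_{0,1} = λ^{N/2} · E_X[ exp( λ ( ⟨Xθ, Xθ'⟩ − (τ²/2)(‖Xθ‖₂² + ‖Xθ'‖₂²) ) ) ]. -/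
/-!
Conditionally on `X`, the integrand in `y` factors over coordinates into exponentials of
quadratics `-a y² + b y + c` with `a = (2 - σ²) / (2σ²)`: for `σ² < 2` the two Gaussian factors
of variance `σ²` outweigh the `N(0, 1)` density in the denominator, so `a > 0` and completing the
square evaluates each coordinate integral. With `σ² = 1 - τ²` one has
`σ² (2 - σ²) = 1 - τ⁴ = λ⁻¹`, which yields the factor `λ^{N/2}` and the exponent.
-/

open MeasureTheory Real Finset

theorem integral_exp_neg_mul_sq_add_mul_add {a : ℝ} (ha : a ≠ 0) (b c : ℝ) :
    ∫ t : ℝ, exp (-a * t ^ 2 + b * t + c) = √(π / a) * exp (b ^ 2 / (4 * a) + c) := by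
  have complete_square : ∀ t : ℝ,
      -a * t ^ 2 + b * t + c = -a * (t - b / (2 * a)) ^ 2 + (b ^ 2 / (4 * a) + c) := by
    intro t; field_simp; ring
  simp_rw [complete_square, exp_add, integral_mul_const]
  rw [integral_sub_right_eq_self (fun t : ℝ => exp (-a * t ^ 2)), integral_gaussian]

theorem integral_exp_sum_quadratic {ι : Type*} [Fintype ι] {a : ℝ} (ha : a ≠ 0) (b c : ι → ℝ) :
    ∫ y : ι → ℝ, exp (∑ i, (-a * y i ^ 2 + b i * y i + c i))
      = √(π / a) ^ Fintype.card ι * exp (∑ i, (b i ^ 2 / (4 * a) + c i)) := by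
  simp_rw [exp_sum]
  rw [integral_fintype_prod_volume_eq_prod (fun i t => exp (-a * t ^ 2 + b i * t + c i))]
  simp_rw [integral_exp_neg_mul_sq_add_mul_add ha, prod_mul_distrib, prod_const, card_univ]

-- `s` is the common variance, not the standard deviation.
noncomputable def isotropicGaussianPDF {ι : Type*} [Fintype ι] (s : ℝ) (m y : ι → ℝ) : ℝ :=
  (2 * π * s) ^ (-(Fintype.card ι : ℝ) / 2) * exp (-(∑ i, (y i - m i) ^ 2) / (2 * s))

section ChiSquare

variable {ι : Type*} [Fintype ι] {s : ℝ}

theorem isotropicGaussianPDF_mul_div_eq (hs : 0 < s) (m m' y : ι → ℝ) :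
    isotropicGaussianPDF s m y * isotropicGaussianPDF s m' y / isotropicGaussianPDF 1 0 y
      = (2 * π * s) ^ (-(Fintype.card ι : ℝ) / 2) * (2 * π * s) ^ (-(Fintype.card ι : ℝ) / 2)
          / (2 * π) ^ (-(Fintype.card ι : ℝ) / 2)
        * exp (∑ i, (-((2 - s) / (2 * s)) * y i ^ 2 + (m i + m' i) / s * y i
            + -(m i ^ 2 + m' i ^ 2) / (2 * s))) := by
  have exponent : ∑ i, (-((2 - s) / (2 * s)) * y i ^ 2 + (m i + m' i) / s * y i
        + -(m i ^ 2 + m' i ^ 2) / (2 * s))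
      = -(∑ i, (y i - m i) ^ 2) / (2 * s) + -(∑ i, (y i - m' i) ^ 2) / (2 * s)
        - -(∑ i, y i ^ 2) / 2 := by
    simp only [neg_div, sum_div, ← sum_neg_distrib, ← sum_add_distrib, ← sum_sub_distrib]
    refine sum_congr rfl fun i _ => ?_
    field_simp
    ring
  rw [exponent, exp_sub, exp_add]
  simp only [isotropicGaussianPDF, Pi.zero_apply, sub_zero, mul_one]
  field_simp

theorem isotropicGaussian_chiSq_const_eq (hs : 0 < s) (hs2 : s < 2) (n : ℕ) :
    (2 * π * s) ^ (-(n : ℝ) / 2) * (2 * π * s) ^ (-(n : ℝ) / 2) / (2 * π) ^ (-(n : ℝ) / 2)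
        * √(π / ((2 - s) / (2 * s))) ^ n
      = (s * (2 - s))⁻¹ ^ ((n : ℝ) / 2) := by
  have hπ := pi_pos
  have h2s : 0 < 2 - s := by linarith
  have rpow_neg_half : ∀ x : ℝ, 0 < x → x ^ (-(n : ℝ) / 2) = x⁻¹ ^ ((n : ℝ) / 2) := fun x hx => by
    rw [neg_div, rpow_neg hx.le, inv_rpow hx.le]
  have sqrt_pow : √(π / ((2 - s) / (2 * s))) ^ n = (π / ((2 - s) / (2 * s))) ^ ((n : ℝ) / 2) := by
    rw [sqrt_eq_rpow, ← rpow_natCast, ← rpow_mul (by positivity)]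
    ring_nf
  have base : (2 * π * s)⁻¹ * (2 * π * s)⁻¹ / (2 * π)⁻¹ * (π / ((2 - s) / (2 * s)))
      = (s * (2 - s))⁻¹ := by
    field_simp
  rw [sqrt_pow, rpow_neg_half _ (by positivity), rpow_neg_half _ (by positivity),
    ← mul_rpow (by positivity) (by positivity), ← div_rpow (by positivity) (by positivity),
    ← mul_rpow (by positivity) (by positivity), base]

theorem integral_isotropicGaussianPDF_mul_div (hs : 0 < s) (hs2 : s < 2) (m m' : ι → ℝ) :
    ∫ y, isotropicGaussianPDF s m y * isotropicGaussianPDF s m' y / isotropicGaussianPDF 1 0 y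
      = (s * (2 - s))⁻¹ ^ ((Fintype.card ι : ℝ) / 2)
        * exp (∑ i, ((m i + m' i) ^ 2 / (2 * s * (2 - s)) - (m i ^ 2 + m' i ^ 2) / (2 * s))) := by
  have ha : (2 - s) / (2 * s) ≠ 0 := by
    have : 0 < 2 - s := by linarith
    positivity
  simp_rw [isotropicGaussianPDF_mul_div_eq hs, integral_const_mul, integral_exp_sum_quadratic ha,
    ← mul_assoc, isotropicGaussian_chiSq_const_eq hs hs2]
  congr 2
  refine sum_congr rfl fun i _ => ?_
  have : 2 - s ≠ 0 := by linarith
  field_simp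
  ring

end ChiSquare

theorem stmt_10_general (N p : ℕ) (μX : Measure (Fin N → Fin p → ℝ))
    (τ σ lam : ℝ) (hτ : τ ∈ Set.Ioo (0 : ℝ) 1)
    (hσ : σ = Real.sqrt (1 - τ ^ 2)) (hlam : lam = (1 - τ ^ 4)⁻¹)
    (θ θ' : Fin p → ℝ)
    (g : (Fin N → ℝ) → (Fin N → ℝ) → ℝ)
    (hg : g = fun m y => (2 * Real.pi * σ ^ 2) ^ (-(N : ℝ) / 2) *
      Real.exp (-(∑ i, (y i - m i) ^ 2) / (2 * σ ^ 2)))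
    (φ : (Fin N → ℝ) → ℝ)
    (hφ : φ = fun y => (2 * Real.pi) ^ (-(N : ℝ) / 2) *
      Real.exp (-(∑ i, y i ^ 2) / 2)) :
    ∫ X, (∫ y : Fin N → ℝ,
        g (fun i => ∑ k, X i k * θ k) y * g (fun i => ∑ k, X i k * θ' k) y / φ y) ∂μX
      = lam ^ ((N : ℝ) / 2) *
        ∫ X, Real.exp (lam *
          ((∑ i, (∑ k, X i k * θ k) * (∑ k, X i k * θ' k))
            - τ ^ 2 / 2 * ((∑ i, (∑ k, X i k * θ k) ^ 2)
              + ∑ i, (∑ k, X i k * θ' k) ^ 2))) ∂μX := by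
  obtain ⟨hτ0, hτ1⟩ := hτ
  have hσ2 : σ ^ 2 = 1 - τ ^ 2 := by rw [hσ, sq_sqrt (by nlinarith)]
  have hg' : g = isotropicGaussianPDF (σ ^ 2) := by
    funext m y
    simp only [hg, isotropicGaussianPDF, Fintype.card_fin]
  have hφ' : φ = isotropicGaussianPDF 1 0 := by
    funext y
    simp only [hφ, isotropicGaussianPDF, Fintype.card_fin, Pi.zero_apply, sub_zero, mul_one]
  have conditional : ∀ m m' : Fin N → ℝ, ∫ y, g m y * g m' y / φ y
      = lam ^ ((N : ℝ) / 2) * exp (lam * ((∑ i, m i * m' i)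
          - τ ^ 2 / 2 * ((∑ i, m i ^ 2) + ∑ i, m' i ^ 2))) := by
    intro m m'
    rw [hg', hφ', integral_isotropicGaussianPDF_mul_div (by nlinarith) (by nlinarith),
      Fintype.card_fin, hσ2, ← sum_add_distrib, mul_sum, ← sum_sub_distrib, mul_sum,
      show (1 - τ ^ 2) * (2 - (1 - τ ^ 2)) = 1 - τ ^ 4 by ring, ← hlam]
    congr 2
    refine sum_congr rfl fun i _ => ?_
    have : 1 - τ ^ 2 ≠ 0 := by nlinarith
    have : 2 - (1 - τ ^ 2) ≠ 0 := by nlinarith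
    have : 1 - τ ^ 4 ≠ 0 := by nlinarith
    rw [hlam]
    field_simp
    ring
  rw [← integral_const_mul]
  exact integral_congr_ae (Filter.Eventually.of_forall fun X => conditional _ _)

open MeasureTheory in
/-- Chi-square functional identity for Gaussian regression with random design:
`∫ dP_{θ,σ} dP_{θ',σ}/dP_{0,1}
  = λ^{N/2} E_X exp(λ(⟨Xθ, Xθ'⟩ − (τ²/2)(‖Xθ‖² + ‖Xθ'‖²)))`,
where the design matrix `X` (an `N × p` random matrix) is encoded as an element of
`Fin N → Fin p → ℝ` and `Xθ i = ∑ k, X i k * θ k`. -/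
theorem stmt_10 (N p : ℕ) (μX : Measure (Fin N → Fin p → ℝ))
    [IsProbabilityMeasure μX] (τ σ lam : ℝ) (hτ : τ ∈ Set.Ioo (0 : ℝ) 1)
    (hσ : σ = Real.sqrt (1 - τ ^ 2)) (hlam : lam = (1 - τ ^ 4)⁻¹)
    (θ θ' : Fin p → ℝ)
    (g : (Fin N → ℝ) → (Fin N → ℝ) → ℝ)
    (hg : g = fun m y => (2 * Real.pi * σ ^ 2) ^ (-(N : ℝ) / 2) *
      Real.exp (-(∑ i, (y i - m i) ^ 2) / (2 * σ ^ 2)))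
    (φ : (Fin N → ℝ) → ℝ)
    (hφ : φ = fun y => (2 * Real.pi) ^ (-(N : ℝ) / 2) *
      Real.exp (-(∑ i, y i ^ 2) / 2)) :
    ∫ X, (∫ y : Fin N → ℝ,
        g (fun i => ∑ k, X i k * θ k) y * g (fun i => ∑ k, X i k * θ' k) y / φ y) ∂μX
      = lam ^ ((N : ℝ) / 2) *
        ∫ X, Real.exp (lam *
          ((∑ i, (∑ k, X i k * θ k) * (∑ k, X i k * θ' k))
            - τ ^ 2 / 2 * ((∑ i, (∑ k, X i k * θ k) ^ 2)
              + ∑ i, (∑ k, X i k * θ' k) ^ 2))) ∂μX :=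
  stmt_10_general N p μX τ σ lam hτ hσ hlam θ θ' g hg φ hφ
end
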